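/- Let n ≥ 7 be odd, and let O₁ = ((n-2,n-1,n),(1,2,…,n-2)) and O₅ = ((3,4,…,n),(1,2,…,n)). Then S(T⁻¹(S(S(O₁)))) ≃ O₅, i.e. applying S twice, then T⁻¹, then S to O₁ yields an origami simultaneously conjugate to O₅. -/

import Mathlib

open Equiv

/-- The permutation of `Fin n` given by 1-based cycle notation `(a1, ..., ak)`:
each listed square `a` (an element of `{1, ..., n}`) corresponds to `a - 1 : Fin n`,
and the cycle sends each listed element to the next one, the last back to the first. -/
def cyc (n : ℕ) (l : List ℕ) : Equiv.Perm (Fin n) :=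
  (l.filterMap fun a => if h : a - 1 < n then some (⟨a - 1, h⟩ : Fin n) else none).formPerm

/-- Equivalence of origami pairs by simultaneous conjugation. -/
def OrigamiEquiv {n : ℕ} (p q : Equiv.Perm (Fin n) × Equiv.Perm (Fin n)) : Prop :=
  ∃ g : Equiv.Perm (Fin n), g * p.1 * g⁻¹ = q.1 ∧ g * p.2 * g⁻¹ = q.2

/-- The action of `T`: `T(h,v) = (h, v h⁻¹)`. -/
def Tact {n : ℕ} (p : Equiv.Perm (Fin n) × Equiv.Perm (Fin n)) :
    Equiv.Perm (Fin n) × Equiv.Perm (Fin n) := (p.1, p.2 * p.1⁻¹)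

/-- The action of `T⁻¹`: `T⁻¹(h,v) = (h, v h)`. -/
def TinvAct {n : ℕ} (p : Equiv.Perm (Fin n) × Equiv.Perm (Fin n)) :
    Equiv.Perm (Fin n) × Equiv.Perm (Fin n) := (p.1, p.2 * p.1)

/-- The action of `S`: `S(h,v) = (h v⁻¹, v)`. -/
def Sact {n : ℕ} (p : Equiv.Perm (Fin n) × Equiv.Perm (Fin n)) :
    Equiv.Perm (Fin n) × Equiv.Perm (Fin n) := (p.1 * p.2⁻¹, p.2)

/-- The action of `S⁻¹`: `S⁻¹(h,v) = (h v, v)`. -/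
def SinvAct {n : ℕ} (p : Equiv.Perm (Fin n) × Equiv.Perm (Fin n)) :
    Equiv.Perm (Fin n) × Equiv.Perm (Fin n) := (p.1 * p.2, p.2)

/-- `O₁ = ((n-2,n-1,n), (1,2,...,n-2))` -/
def OB1 (n : ℕ) : Equiv.Perm (Fin n) × Equiv.Perm (Fin n) :=
  (cyc n [n - 2, n - 1, n], cyc n (List.range' 1 (n - 2)))

/-- `O₅ = ((3,4,...,n), (1,2,...,n))` -/
def OB5 (n : ℕ) : Equiv.Perm (Fin n) × Equiv.Perm (Fin n) :=
  (cyc n (List.range' 3 (n - 2)), cyc n (List.range' 1 n))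


section OrigamiHelpers

lemma origami_filterMap_eq_map {n : ℕ} (hn : 0 < n) (l : List ℕ) (hl : ∀ a ∈ l, a - 1 < n) :
    (l.filterMap fun a => if h : a - 1 < n then some (⟨a - 1, h⟩ : Fin n) else none)
      = l.map (fun a => (⟨(a - 1) % n, Nat.mod_lt _ hn⟩ : Fin n)) := by
  induction l with
  | nil => simp
  | cons a l ih =>
    have ha := hl a (by simp)
    rw [List.filterMap_cons, List.map_cons, dif_pos ha,
      ih (fun b hb => hl b (List.mem_cons_of_mem _ hb))]
    show (⟨a - 1, ha⟩ : Fin n) :: _ = _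
    congr 1
    exact Fin.ext (show a - 1 = (a - 1) % n from (Nat.mod_eq_of_lt ha).symm)

lemma cyc_range'_val {n : ℕ} (hn : 0 < n) (a k : ℕ) (ha : 1 ≤ a) (hk : a - 1 + k ≤ n)
    (x : Fin n) :
    ((cyc n (List.range' a k)) x : ℕ) =
      if a - 1 ≤ (x : ℕ) ∧ (x : ℕ) < a - 1 + k then a - 1 + (((x : ℕ) - (a - 1) + 1) % k)
      else (x : ℕ) := by
  unfold cyc
  rw [origami_filterMap_eq_map hn _ (by intro b hb; rw [List.mem_range'_1] at hb; omega)]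
  set g : ℕ → Fin n := fun b => (⟨(b - 1) % n, Nat.mod_lt _ hn⟩ : Fin n) with hg
  set L : List (Fin n) := (List.range' a k).map g with hL
  have hlen : L.length = k := by simp [hL]
  have hget : ∀ i, (hi : i < k) → (L[i]'(by omega) : ℕ) = a - 1 + i := by
    intro i hi
    simp only [hL, List.getElem_map, List.getElem_range', hg]
    have h1 : a + 1 * i - 1 = a - 1 + i := by omega
    rw [h1, Nat.mod_eq_of_lt (by omega)]
  have hmapval : L.map (Fin.val) = List.range' (a - 1) k := by
    apply List.ext_getElem
    · simp [hlen]
    · intro i h1 h2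
      have hik : i < k := by simpa [hlen] using h2
      simp only [List.getElem_map, List.getElem_range']
      rw [hget i hik]; omega
  have hnd : L.Nodup := List.Nodup.of_map Fin.val (hmapval ▸ List.nodup_range' 1 one_pos)
  have hmem : ∀ y : Fin n, y ∈ L → a - 1 ≤ (y : ℕ) ∧ (y : ℕ) < a - 1 + k := by
    intro y hy
    obtain ⟨i, hi, hiy⟩ := List.getElem_of_mem hy
    have hik : i < k := by omega
    rw [← hiy, hget i hik]
    omega
  by_cases hx : a - 1 ≤ (x : ℕ) ∧ (x : ℕ) < a - 1 + k
  · have hk0 : 0 < k := by omega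
    set i := (x : ℕ) - (a - 1) with hi
    have hik : i < k := by omega
    have hxL : x = L[i]'(by omega) := Fin.ext (by rw [hget i hik]; omega)
    rw [if_pos hx, hxL, List.formPerm_apply_getElem _ hnd i (by omega),
      hget ((i + 1) % L.length) (by rw [hlen]; exact Nat.mod_lt _ hk0), hlen]
  · rw [if_neg hx, List.formPerm_apply_of_notMem (fun h => hx (hmem x h))]

lemma origami_mod_succ_lt {m k : ℕ} (h : m < k) :
    (m + 1) % k = if m + 1 = k then 0 else m + 1 := by
  split_ifs with h'
  · rw [h']; exact Nat.mod_self _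
  · exact Nat.mod_eq_of_lt (by omega)

def gfun (n x : ℕ) : ℕ :=
  if x = 0 then 2 else if x = 1 then n - 1 else if x = n - 2 then 0 else n - x
def gifun (n x : ℕ) : ℕ :=
  if x = 0 then n - 2 else if x = 1 then n - 1 else if x = 2 then 0 else n - x
def vfun (n x : ℕ) : ℕ := if x + 1 = n - 2 then 0 else if x + 1 < n - 2 then x + 1 else x
def wfun (n x : ℕ) : ℕ := if x + 1 = n then 0 else x + 1
def cfun (n x : ℕ) : ℕ := if x = n - 1 then 2 else if 2 ≤ x then x + 1 else x
def hfun (n x : ℕ) : ℕ :=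
  if x = n - 3 then n - 2 else if x = n - 2 then n - 1 else if x = n - 1 then n - 3 else x

lemma gfun_spec (n x : ℕ) : (x = 0 ∧ gfun n x = 2) ∨ (x ≠ 0 ∧ x = 1 ∧ gfun n x = n - 1) ∨
    (x ≠ 0 ∧ x ≠ 1 ∧ x = n - 2 ∧ gfun n x = 0) ∨
    (x ≠ 0 ∧ x ≠ 1 ∧ x ≠ n - 2 ∧ gfun n x = n - x) := by
  unfold gfun; split_ifs <;> omega


lemma gifun_spec (n x : ℕ) : (x = 0 ∧ gifun n x = n - 2) ∨ (x ≠ 0 ∧ x = 1 ∧ gifun n x = n - 1) ∨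
    (x ≠ 0 ∧ x ≠ 1 ∧ x = 2 ∧ gifun n x = 0) ∨
    (x ≠ 0 ∧ x ≠ 1 ∧ x ≠ 2 ∧ gifun n x = n - x) := by
  unfold gifun; split_ifs <;> omega

lemma vfun_spec (n x : ℕ) : (x + 1 = n - 2 ∧ vfun n x = 0) ∨
    (x + 1 < n - 2 ∧ vfun n x = x + 1) ∨ (x + 1 > n - 2 ∧ vfun n x = x) := by
  unfold vfun; split_ifs <;> omega

lemma wfun_spec (n x : ℕ) : (x + 1 = n ∧ wfun n x = 0) ∨ (x + 1 ≠ n ∧ wfun n x = x + 1) := by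
  unfold wfun; split_ifs <;> omega

lemma cfun_spec (n x : ℕ) : (x = n - 1 ∧ cfun n x = 2) ∨ (x ≠ n - 1 ∧ 2 ≤ x ∧ cfun n x = x + 1) ∨
    (x ≠ n - 1 ∧ x < 2 ∧ cfun n x = x) := by
  unfold cfun; split_ifs <;> omega

lemma hfun_spec (n x : ℕ) : (x = n - 3 ∧ hfun n x = n - 2) ∨
    (x ≠ n - 3 ∧ x = n - 2 ∧ hfun n x = n - 1) ∨
    (x ≠ n - 3 ∧ x ≠ n - 2 ∧ x = n - 1 ∧ hfun n x = n - 3) ∨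
    (x ≠ n - 3 ∧ x ≠ n - 2 ∧ x ≠ n - 1 ∧ hfun n x = x) := by
  unfold hfun; split_ifs <;> omega

lemma v_val {n : ℕ} (hn : 7 ≤ n) (x : Fin n) :
    ((cyc n (List.range' 1 (n - 2))) x : ℕ) = vfun n (x : ℕ) := by
  have hx := x.isLt
  rw [cyc_range'_val (by omega) 1 (n - 2) le_rfl (by omega) x]
  unfold vfun
  by_cases hlt : (x : ℕ) < n - 2
  · rw [if_pos (by omega), show (x : ℕ) - (1 - 1) + 1 = (x : ℕ) + 1 from by omega,
      origami_mod_succ_lt hlt]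
    split_ifs <;> omega
  · rw [if_neg (by omega)]; split_ifs <;> omega

lemma w_val {n : ℕ} (hn : 7 ≤ n) (x : Fin n) :
    ((cyc n (List.range' 1 n)) x : ℕ) = wfun n (x : ℕ) := by
  have hx := x.isLt
  rw [cyc_range'_val (by omega) 1 n le_rfl (by omega) x,
    if_pos (by omega), show (x : ℕ) - (1 - 1) + 1 = (x : ℕ) + 1 from by omega,
    origami_mod_succ_lt hx]
  unfold wfun
  split_ifs <;> omega

lemma c_val {n : ℕ} (hn : 7 ≤ n) (x : Fin n) :
    ((cyc n (List.range' 3 (n - 2))) x : ℕ) = cfun n (x : ℕ) := by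
  have hx := x.isLt
  rw [cyc_range'_val (by omega) 3 (n - 2) (by omega) (by omega) x]
  unfold cfun
  by_cases hge : 2 ≤ (x : ℕ)
  · rw [if_pos (by omega), show (x : ℕ) - (3 - 1) + 1 = ((x : ℕ) - 2) + 1 from by omega,
      origami_mod_succ_lt (show (x : ℕ) - 2 < n - 2 from by omega)]
    split_ifs <;> omega
  · rw [if_neg (by omega)]; split_ifs <;> omega

lemma h_val {n : ℕ} (hn : 7 ≤ n) (x : Fin n) :
    ((cyc n [n - 2, n - 1, n]) x : ℕ) = hfun n (x : ℕ) := by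
  have hx := x.isLt
  have hlist : [n - 2, n - 1, n] = List.range' (n - 2) 3 := by
    simp only [List.range']
    have h1 : n - 2 + 1 = n - 1 := by omega
    have h2 : n - 1 + 1 = n := by omega
    rw [h1, h2]
  rw [hlist, cyc_range'_val (by omega) (n - 2) 3 (by omega) (by omega) x]
  unfold hfun
  by_cases hge : n - 3 ≤ (x : ℕ)
  · rw [if_pos (by omega),
      origami_mod_succ_lt (show (x : ℕ) - (n - 2 - 1) < 3 from by omega)]
    split_ifs <;> omega
  · rw [if_neg (by omega)]; split_ifs <;> omega

lemma gfun_lt {n : ℕ} (hn : 7 ≤ n) {x : ℕ} (hx : x < n) : gfun n x < n := by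
  unfold gfun; split_ifs <;> omega

lemma gifun_lt {n : ℕ} (hn : 7 ≤ n) {x : ℕ} (hx : x < n) : gifun n x < n := by
  unfold gifun; split_ifs <;> omega

def gperm (n : ℕ) (hn : 7 ≤ n) : Equiv.Perm (Fin n) where
  toFun x := ⟨gfun n x, gfun_lt hn x.isLt⟩
  invFun x := ⟨gifun n x, gifun_lt hn x.isLt⟩
  left_inv x := Fin.ext (by
    have hx := x.isLt
    show gifun n (gfun n (x : ℕ)) = (x : ℕ)
    have h1 := gfun_spec n (x : ℕ)
    have h2 := gifun_spec n (gfun n (x : ℕ))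
    omega)
  right_inv x := Fin.ext (by
    have hx := x.isLt
    show gfun n (gifun n (x : ℕ)) = (x : ℕ)
    have h1 := gifun_spec n (x : ℕ)
    have h2 := gfun_spec n (gifun n (x : ℕ))
    omega)

lemma nat1 {n x : ℕ} (hn : 7 ≤ n) (hx : x < n) : gfun n x = cfun n (gfun n (vfun n x)) := by
  have h1 := gfun_spec n x
  have h2 := vfun_spec n x
  have h3 := gfun_spec n (vfun n x)
  have h4 := cfun_spec n (gfun n (vfun n x))
  omega

lemma nat2 {n x : ℕ} (hn : 7 ≤ n) (hx : x < n) :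
    gfun n (vfun n (hfun n x)) = wfun n (gfun n (vfun n (vfun n x))) := by
  have h1 := hfun_spec n x
  have h2 := vfun_spec n (hfun n x)
  have h3 := gfun_spec n (vfun n (hfun n x))
  have h4 := vfun_spec n x
  have h5 := vfun_spec n (vfun n x)
  have h6 := gfun_spec n (vfun n (vfun n x))
  have h7 := wfun_spec n (gfun n (vfun n (vfun n x)))
  omega

end OrigamiHelpers

theorem stmt16 (n : ℕ) (hn : 7 ≤ n) (hno : Odd n) :
    OrigamiEquiv (Sact (TinvAct (Sact (Sact (OB1 n))))) (OB5 n) := by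
  simp only [OrigamiEquiv, Sact, TinvAct, OB1, OB5]
  set v := cyc n (List.range' 1 (n - 2)) with hv
  set hp := cyc n [n - 2, n - 1, n] with hhp
  set c := cyc n (List.range' 3 (n - 2)) with hc
  set w := cyc n (List.range' 1 n) with hw
  set g := gperm n hn with hg
  have hgval : ∀ y : Fin n, ((g y : Fin n) : ℕ) = gfun n (y : ℕ) := fun y => rfl
  have hvval : ∀ y : Fin n, ((v y) : ℕ) = vfun n (y : ℕ) := by rw [hv]; exact v_val hn
  have hwval : ∀ y : Fin n, ((w y) : ℕ) = wfun n (y : ℕ) := by rw [hw]; exact w_val hn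
  have hcval : ∀ y : Fin n, ((c y) : ℕ) = cfun n (y : ℕ) := by rw [hc]; exact c_val hn
  have hpval : ∀ y : Fin n, ((hp y) : ℕ) = hfun n (y : ℕ) := by rw [hhp]; exact h_val hn
  have e1 : g = c * (g * v) := by
    apply Equiv.ext
    intro x
    apply Fin.ext
    simp only [Equiv.Perm.mul_apply, hgval, hvval, hcval]
    exact nat1 hn x.isLt
  have e2 : g * v * hp = w * (g * (v * v)) := by
    apply Equiv.ext
    intro x
    apply Fin.ext
    simp only [Equiv.Perm.mul_apply, hgval, hvval, hwval, hpval]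
    exact nat2 hn x.isLt
  have E1 : g * v⁻¹ * g⁻¹ = c := by
    nth_rewrite 1 [e1]
    group
  have E2 : g * (v * (hp * v⁻¹ * v⁻¹)) * g⁻¹ = w := by
    have h2 : g * (v * (hp * v⁻¹ * v⁻¹)) * g⁻¹ = (g * v * hp) * (v⁻¹ * (v⁻¹ * g⁻¹)) := by
      group
    rw [h2, e2]
    group
  refine ⟨g, ?_, ?_⟩
  · refine Eq.trans ?_ E1
    group
  · refine Eq.trans ?_ E2
    group
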